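/- The boundary values of ψ(λ) = −2√(λ(λ−1)) + ln(−1 + 2λ + 2√(λ(λ−1))) on the real axis satisfy: ψ_+(λ) − ψ_−(λ) = 2πi for λ ∈ (−∞, 0), and ψ_+(λ) + ψ_−(λ) = 0 for λ ∈ (0,1), where ψ_± denote the limits from the upper/lower half-plane. -/

import Mathlib

open Complex Filter

/-- The branch of `√(λ(λ - 1))` with cut `[0, 1]` that behaves like `λ` as `λ → +∞`. -/
noncomputable def sqrtBranch1 (l : ℂ) : ℂ :=
  l * (1 - 1 / l) ^ ((1 : ℂ) / 2)

/-- `ψ(λ) = -2√(λ(λ-1)) + ln(-1 + 2λ + 2√(λ(λ-1)))`, analytic on `ℂ \ (-∞, 1]`. -/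
noncomputable def psiFun (l : ℂ) : ℂ :=
  -2 * sqrtBranch1 l + Complex.log (-1 + 2 * l + 2 * sqrtBranch1 l)

/-!
Both `√` and `log` are continuous from the closed upper half-plane at every nonzero point,
including the negative axis, where they take their principal values. Since `1 - 1/z` preserves
the upper half-plane and the logarithm's argument `A = -1 + 2z + 2√(z(z-1))` stays there near
`λ < 0` and `λ ∈ (0, 1)`, we get `ψ₊(λ) = ψ(λ)`. Moreover `A + A⁻¹ = 4z - 2`, so `A` is real only
for real `z`; hence neither branch cut is met off the real axis, `ψ(z̄) = conj ψ(z)` there,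
and `ψ₋(λ) = conj ψ(λ)`. So `ψ₊ - ψ₋ = 2i Im ψ(λ)` and `ψ₊ + ψ₋ = 2 Re ψ(λ)`. For `λ < 0` the
square root is real and `A < 0`, so `Im ψ(λ) = π`; for `λ ∈ (0, 1)` the square root is
`i√(λ - λ²)` and `|A| = 1`, so `Re ψ(λ) = 0`.
-/

open ComplexConjugate Set Topology

namespace Complex

theorem continuousWithinAt_log_im_nonneg {w : ℂ} (hw : w ≠ 0) :
    ContinuousWithinAt log {z : ℂ | 0 ≤ z.im} w := by
  by_cases hs : w ∈ slitPlane
  · exact (continuousAt_clog hs).continuousWithinAt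
  · rw [mem_slitPlane_iff, not_or, not_lt, not_not] at hs
    exact continuousWithinAt_log_of_re_neg_of_im_zero
      (hs.1.lt_of_ne fun h => hw (ext h hs.2)) hs.2

theorem continuousWithinAt_cpow_const_im_nonneg {w : ℂ} (hw : w ≠ 0) (y : ℂ) :
    ContinuousWithinAt (· ^ y) {z : ℂ | 0 ≤ z.im} w := by
  have hexp : ContinuousWithinAt (fun z => exp (log z * y)) {z : ℂ | 0 ≤ z.im} w :=
    continuous_exp.continuousAt.comp_continuousWithinAt
      ((continuousWithinAt_log_im_nonneg hw).mul continuousWithinAt_const)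
  refine hexp.congr_of_eventuallyEq ?_ (cpow_def_of_ne_zero hw y)
  filter_upwards [nhdsWithin_le_nhds (isOpen_ne.mem_nhds hw)] with z hz
  exact cpow_def_of_ne_zero hz y

theorem im_one_sub_one_div (z : ℂ) : (1 - 1 / z).im = z.im / normSq z := by
  simp [neg_div]

end Complex

open Complex

theorem sqrtBranch1_sq (z : ℂ) : sqrtBranch1 z ^ 2 = z ^ 2 - z := by
  rcases eq_or_ne z 0 with rfl | hz
  · simp [sqrtBranch1]
  · rw [sqrtBranch1, mul_pow, one_div (2 : ℂ), cpow_ofNat_inv_pow]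
    field_simp

theorem two_mul_re_mul_im_sqrtBranch1 (z : ℂ) :
    2 * (sqrtBranch1 z).re * (sqrtBranch1 z).im = z.im * (2 * z.re - 1) := by
  have h := congrArg im (sqrtBranch1_sq z)
  simp only [sq, mul_im, sub_im] at h
  linarith

theorem sqrtBranch1_conj {z : ℂ} (hz : z.im ≠ 0) :
    sqrtBranch1 (conj z) = conj (sqrtBranch1 z) := by
  have harg : (conj (1 - 1 / z)).arg ≠ Real.pi := by
    rw [Ne, arg_eq_pi_iff, conj_im, im_one_sub_one_div, neg_eq_zero, div_eq_zero_iff,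
      normSq_eq_zero]
    rintro ⟨-, h | rfl⟩
    exacts [hz h, hz rfl]
  have h := cpow_conj (conj (1 - 1 / z)) (1 / 2) harg
  simp only [map_div₀, map_one, map_ofNat, conj_conj, map_sub] at h
  simp only [sqrtBranch1, map_mul, h]

theorem continuousWithinAt_sqrtBranch1 {z : ℂ} (hz0 : z ≠ 0) (hz1 : z ≠ 1) :
    ContinuousWithinAt sqrtBranch1 {w : ℂ | 0 ≤ w.im} z := by
  have hw : ContinuousAt (fun w : ℂ => 1 - 1 / w) z :=
    continuousAt_const.sub (continuousAt_const.div continuousAt_id hz0)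
  have hmaps : MapsTo (fun w : ℂ => 1 - 1 / w) {w : ℂ | 0 ≤ w.im} {w : ℂ | 0 ≤ w.im} :=
    fun w hw => by
      simp only [mem_ofPred_eq, im_one_sub_one_div]
      exact div_nonneg hw (normSq_nonneg w)
  have hne : 1 - 1 / z ≠ 0 := by
    rwa [sub_ne_zero, ne_comm, one_div, inv_ne_one]
  exact continuousWithinAt_id.mul
    ((continuousWithinAt_cpow_const_im_nonneg hne _).comp (f := fun w : ℂ => 1 - 1 / w)
      hw.continuousWithinAt hmaps)

noncomputable def psiLogArg (z : ℂ) : ℂ := -1 + 2 * z + 2 * sqrtBranch1 z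

theorem psiFun_eq (z : ℂ) : psiFun z = -2 * sqrtBranch1 z + log (psiLogArg z) := rfl

/-- `A = psiLogArg z` inverts the Joukowski map: `A + A⁻¹ = 4z - 2`. -/
theorem psiLogArg_mul_sub (z : ℂ) : psiLogArg z * (4 * z - 2 - psiLogArg z) = 1 := by
  simp only [psiLogArg]
  linear_combination (-4) * sqrtBranch1_sq z

theorem psiLogArg_ne_zero (z : ℂ) : psiLogArg z ≠ 0 :=
  left_ne_zero_of_mul_eq_one (psiLogArg_mul_sub z)

theorem im_psiLogArg_ne_zero {z : ℂ} (hz : z.im ≠ 0) : (psiLogArg z).im ≠ 0 := by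
  intro h
  have hre : (psiLogArg z).re ≠ 0 := fun h' => by
    simpa [h, h'] using congrArg re (psiLogArg_mul_sub z)
  have him : (psiLogArg z).re * (4 * z.im) = 0 := by
    simpa [h] using congrArg im (psiLogArg_mul_sub z)
  exact hz (by simpa [hre] using him)

theorem im_psiLogArg (z : ℂ) : (psiLogArg z).im = 2 * z.im + 2 * (sqrtBranch1 z).im := by
  simp [psiLogArg]

theorem psiFun_conj {z : ℂ} (hz : z.im ≠ 0) : psiFun (conj z) = conj (psiFun z) := by
  have harg : (psiLogArg z).arg ≠ Real.pi := fun h =>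
    im_psiLogArg_ne_zero hz (arg_eq_pi_iff.1 h).2
  have hA : psiLogArg (conj z) = conj (psiLogArg z) := by
    simp only [psiLogArg, sqrtBranch1_conj hz, map_add, map_mul, map_neg, map_one, map_ofNat]
  rw [psiFun_eq, psiFun_eq, hA, log_conj _ harg, sqrtBranch1_conj hz]
  simp only [map_add, map_mul, map_neg, map_ofNat]

theorem continuousWithinAt_psiLogArg {z : ℂ} (hz0 : z ≠ 0) (hz1 : z ≠ 1) :
    ContinuousWithinAt psiLogArg {w : ℂ | 0 ≤ w.im} z :=
  (continuousWithinAt_const.add (continuousWithinAt_const.mul continuousWithinAt_id)).add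
    (continuousWithinAt_const.mul (continuousWithinAt_sqrtBranch1 hz0 hz1))

theorem continuousWithinAt_psiFun {z : ℂ} (hz0 : z ≠ 0) (hz1 : z ≠ 1)
    (hA : ∀ᶠ w in 𝓝[{w : ℂ | 0 ≤ w.im}] z, 0 ≤ (psiLogArg w).im) :
    ContinuousWithinAt psiFun {w : ℂ | 0 ≤ w.im} z := by
  have hlog := (continuousWithinAt_log_im_nonneg
    (psiLogArg_ne_zero z)).comp_of_preimage_mem_nhdsWithin (continuousWithinAt_psiLogArg hz0 hz1) hA
  exact (continuousWithinAt_const.mul (continuousWithinAt_sqrtBranch1 hz0 hz1)).add hlog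

theorem sqrtBranch1_ofReal_of_nonneg {x : ℝ} (hx : 0 ≤ 1 - x⁻¹) :
    sqrtBranch1 x = ↑(x * √(1 - x⁻¹)) := by
  have hw : (1 : ℂ) - 1 / x = ↑(1 - x⁻¹) := by push_cast; ring
  rw [sqrtBranch1, hw, Real.sqrt_eq_rpow, ofReal_mul, ofReal_cpow hx]
  push_cast
  ring

theorem sqrtBranch1_ofReal_of_nonpos {x : ℝ} (hx : 1 - x⁻¹ ≤ 0) :
    sqrtBranch1 x = ↑(x * √(x⁻¹ - 1)) * I := by
  have hw : (1 : ℂ) - 1 / x = ↑(1 - x⁻¹) := by push_cast; ring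
  rw [sqrtBranch1, hw, ofReal_cpow_of_nonpos hx, Real.sqrt_eq_rpow, ofReal_mul,
    ofReal_cpow (by linarith), show (Real.pi : ℂ) * I * (1 / 2) = Real.pi / 2 * I by ring,
    exp_pi_div_two_mul_I, ← ofReal_neg, neg_sub]
  push_cast
  ring

theorem im_psiFun_ofReal_of_neg {x : ℝ} (hx : x < 0) : (psiFun x).im = Real.pi := by
  have hs : sqrtBranch1 x = ↑(x * √(1 - x⁻¹)) :=
    sqrtBranch1_ofReal_of_nonneg (by have := inv_lt_zero.2 hx; linarith)
  have hA : psiLogArg x = ↑(-1 + 2 * x + 2 * (x * √(1 - x⁻¹))) := by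
    rw [psiLogArg, hs]; push_cast; ring
  have hneg : -1 + 2 * x + 2 * (x * √(1 - x⁻¹)) < 0 := by
    nlinarith [Real.sqrt_nonneg (1 - x⁻¹)]
  rw [psiFun_eq, hA, hs, add_im, log_im, arg_ofReal_of_neg hneg]
  simp

theorem re_psiFun_ofReal_of_mem_Ioo {x : ℝ} (hx0 : 0 < x) (hx1 : x < 1) : (psiFun x).re = 0 := by
  have hinv : 1 < x⁻¹ := one_lt_inv₀ hx0 |>.2 hx1
  set b := x * √(x⁻¹ - 1)
  have hs : sqrtBranch1 x = b * I := sqrtBranch1_ofReal_of_nonpos (by linarith)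
  have hb : b ^ 2 = x - x ^ 2 := by
    simp only [b, mul_pow, Real.sq_sqrt (by linarith : (0:ℝ) ≤ x⁻¹ - 1)]
    field_simp
  have hA : psiLogArg x = ↑(2 * x - 1) + ↑(2 * b) * I := by
    rw [psiLogArg, hs]; push_cast; ring
  have hnorm : ‖psiLogArg x‖ = 1 := by
    rw [hA, norm_add_mul_I, ← Real.sqrt_one]
    congr 1
    linear_combination 4 * hb
  rw [psiFun_eq, hs, add_re, log_re, hnorm]
  simp

theorem eventually_im_psiLogArg_nonneg_of_neg {x : ℝ} (hx : x < 0) :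
    ∀ᶠ w in 𝓝[{w : ℂ | 0 ≤ w.im}] (x : ℂ), 0 ≤ (psiLogArg w).im := by
  have hx0 : (x : ℂ) ≠ 0 := ofReal_ne_zero.2 hx.ne
  have hx1 : (x : ℂ) ≠ 1 := by exact_mod_cast (hx.trans one_pos).ne
  have hinv : 0 < 1 - x⁻¹ := by have := inv_lt_zero.2 hx; linarith
  have hs : (sqrtBranch1 x).re < 0 := by
    rw [sqrtBranch1_ofReal_of_nonneg hinv.le, ofReal_re]
    exact mul_neg_of_neg_of_pos hx (Real.sqrt_pos.2 hinv)
  have hs_ev : ∀ᶠ w in 𝓝[{w : ℂ | 0 ≤ w.im}] (x : ℂ), (sqrtBranch1 w).re < 0 :=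
    (continuous_re.continuousAt.comp_continuousWithinAt
      (continuousWithinAt_sqrtBranch1 hx0 hx1)).tendsto.eventually (gt_mem_nhds hs)
  have hre_ev : ∀ᶠ w in 𝓝[{w : ℂ | 0 ≤ w.im}] (x : ℂ), w.re < 1 / 2 :=
    nhdsWithin_le_nhds <| (continuous_re.tendsto (x : ℂ)).eventually
      (gt_mem_nhds (by rw [ofReal_re]; linarith))
  filter_upwards [hs_ev, hre_ev, self_mem_nhdsWithin] with w hsw hrew (himw : 0 ≤ w.im)
  -- `Im(s²) = Im(w² - w)` pins the sign of `Im s` once `Re s < 0`.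
  have hprod := two_mul_re_mul_im_sqrtBranch1 w
  have him_s : 0 ≤ (sqrtBranch1 w).im := by
    nlinarith [mul_nonneg himw (by linarith : (0 : ℝ) ≤ 1 - 2 * w.re)]
  rw [im_psiLogArg]
  linarith

theorem eventually_im_psiLogArg_nonneg_of_mem_Ioo {x : ℝ} (hx0 : 0 < x) (hx1 : x < 1) :
    ∀ᶠ w in 𝓝[{w : ℂ | 0 ≤ w.im}] (x : ℂ), 0 ≤ (psiLogArg w).im := by
  have hinv : 1 < x⁻¹ := (one_lt_inv₀ hx0).2 hx1
  have him : 0 < (psiLogArg x).im := by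
    rw [im_psiLogArg, sqrtBranch1_ofReal_of_nonpos (by linarith), ofReal_im, mul_I_im,
      ofReal_re, mul_zero, zero_add]
    exact mul_pos two_pos (mul_pos hx0 (Real.sqrt_pos.2 (by linarith)))
  have hA := continuousWithinAt_psiLogArg (ofReal_ne_zero.2 hx0.ne') (by exact_mod_cast hx1.ne)
  filter_upwards [(continuous_im.continuousAt.comp_continuousWithinAt hA).tendsto.eventually
    (lt_mem_nhds him)] with w hw
  exact hw.le

theorem tendsto_ofReal_add_mul_I_nhdsWithin (x : ℝ) :
    Tendsto (fun ε : ℝ => (x : ℂ) + ε * I) (𝓝[>] 0) (𝓝[{w : ℂ | 0 ≤ w.im}] (x : ℂ)) := by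
  refine tendsto_nhdsWithin_iff.2 ⟨?_, ?_⟩
  · have h : Continuous (fun ε : ℝ => (x : ℂ) + ε * I) := by fun_prop
    simpa using (h.tendsto 0).mono_left nhdsWithin_le_nhds
  · filter_upwards [self_mem_nhdsWithin] with ε (hε : 0 < ε)
    simpa using hε.le

theorem tendsto_psiFun_ofReal_add_mul_I {x : ℝ}
    (h : ContinuousWithinAt psiFun {w : ℂ | 0 ≤ w.im} x) :
    Tendsto (fun ε : ℝ => psiFun (x + ε * I)) (𝓝[>] 0) (𝓝 (psiFun x)) :=
  h.tendsto.comp (tendsto_ofReal_add_mul_I_nhdsWithin x)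

theorem tendsto_psiFun_ofReal_sub_mul_I {x : ℝ}
    (h : ContinuousWithinAt psiFun {w : ℂ | 0 ≤ w.im} x) :
    Tendsto (fun ε : ℝ => psiFun (x - ε * I)) (𝓝[>] 0) (𝓝 (conj (psiFun x))) := by
  refine ((continuous_conj.tendsto _).comp (tendsto_psiFun_ofReal_add_mul_I h)).congr' ?_
  filter_upwards [self_mem_nhdsWithin] with ε (hε : 0 < ε)
  have him : ((x : ℂ) + ε * I).im ≠ 0 := by simpa using hε.ne'
  rw [Function.comp_apply, ← psiFun_conj him]
  simp [conj_ofReal, sub_eq_add_neg]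

/-- Boundary values of `ψ` on the real axis: `ψ₊ - ψ₋ = 2πi` on `(-∞, 0)` and
`ψ₊ + ψ₋ = 0` on `(0, 1)`, where `ψ±(λ) = lim_{ε→0+} ψ(λ ± iε)`. -/
theorem psi_boundary_values (l : ℝ) :
    (l < 0 →
      Tendsto (fun ε : ℝ => psiFun ((l : ℂ) + ε * Complex.I) - psiFun ((l : ℂ) - ε * Complex.I))
        (nhdsWithin 0 (Set.Ioi 0)) (nhds (2 * Real.pi * Complex.I))) ∧
    (0 < l → l < 1 →
      Tendsto (fun ε : ℝ => psiFun ((l : ℂ) + ε * Complex.I) + psiFun ((l : ℂ) - ε * Complex.I))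
        (nhdsWithin 0 (Set.Ioi 0)) (nhds 0)) := by
  refine ⟨fun hl => ?_, fun hl0 hl1 => ?_⟩
  · have hψ : ContinuousWithinAt psiFun {w : ℂ | 0 ≤ w.im} l :=
      continuousWithinAt_psiFun (ofReal_ne_zero.2 hl.ne) (by exact_mod_cast (hl.trans one_pos).ne)
        (eventually_im_psiLogArg_nonneg_of_neg hl)
    have h := (tendsto_psiFun_ofReal_add_mul_I hψ).sub (tendsto_psiFun_ofReal_sub_mul_I hψ)
    rwa [sub_conj, im_psiFun_ofReal_of_neg hl, ofReal_mul, ofReal_ofNat] at h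
  · have hψ : ContinuousWithinAt psiFun {w : ℂ | 0 ≤ w.im} l :=
      continuousWithinAt_psiFun (ofReal_ne_zero.2 hl0.ne') (by exact_mod_cast hl1.ne)
        (eventually_im_psiLogArg_nonneg_of_mem_Ioo hl0 hl1)
    have h := (tendsto_psiFun_ofReal_add_mul_I hψ).add (tendsto_psiFun_ofReal_sub_mul_I hψ)
    rwa [add_conj, re_psiFun_ofReal_of_mem_Ioo hl0 hl1, mul_zero, ofReal_zero] at h
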